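/- Let D, E be real n×n matrices and δ > 0, and suppose 2·ln(‖I+D‖ + ‖E‖) < -λ_max(A + Aᵀ)·δ for a real n×n matrix A with λ_max(A+Aᵀ) > 0, where ‖·‖ is the spectral norm. Then there exist ξ > 0 and ε > 0 such that, with ε' := √(1+ξ)·‖E‖/‖I+D‖ (assuming ‖I+D‖ > 0), ρ₁ := (1+ε')‖I+D‖², ρ₂ := (1+1/ε')(1+ξ)‖E‖², κ := ε·r (for any fixed r > 0), and μ := λ_max(A+Aᵀ) + 2ε, one has ln(ρ₁ + ρ₂ + (1-ρ₁)κ) < -μδ when ρ₁ < 1, or at least ρ₁ + ρ₂ < exp(-μδ) provided κ is small enough. -/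

import Mathlib

open scoped Matrix.Norms.L2Operator

/-- Parameter construction in the proof of Theorem 6: if
2·ln(‖I+D‖ + ‖E‖) < -λ_max(A+Aᵀ)·δ with λ_max(A+Aᵀ) > 0 and ‖I+D‖ > 0 (spectral
norms), then there exist ξ > 0 and ε > 0 such that, with
ε' = √(1+ξ)‖E‖/‖I+D‖, ρ₁ = (1+ε')‖I+D‖², ρ₂ = (1+1/ε')(1+ξ)‖E‖², κ = εr and
μ = λ_max(A+Aᵀ) + 2ε, either ρ₁ < 1 and ln(ρ₁+ρ₂+(1-ρ₁)κ) < -μδ, or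
ρ₁ + ρ₂ < exp(-μδ). -/
theorem stmt_10 (n : ℕ) [NeZero n] (D E A : Matrix (Fin n) (Fin n) ℝ)
    (hA : (A + A.transpose).IsHermitian) (δ r : ℝ) (hδ : 0 < δ) (hr : 0 < r)
    (hApos : 0 < ⨆ i, hA.eigenvalues i)
    (hD : 0 < ‖(1 : Matrix (Fin n) (Fin n) ℝ) + D‖)
    (h : 2 * Real.log (‖(1 : Matrix (Fin n) (Fin n) ℝ) + D‖ + ‖E‖) <
      -(⨆ i, hA.eigenvalues i) * δ) :
    ∃ ξ > (0 : ℝ), ∃ ε > (0 : ℝ),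
      let ε' := Real.sqrt (1 + ξ) * ‖E‖ / ‖(1 : Matrix (Fin n) (Fin n) ℝ) + D‖
      let ρ₁ := (1 + ε') * ‖(1 : Matrix (Fin n) (Fin n) ℝ) + D‖ ^ 2
      let ρ₂ := (1 + 1 / ε') * (1 + ξ) * ‖E‖ ^ 2
      let κ := ε * r
      let μ := (⨆ i, hA.eigenvalues i) + 2 * ε
      (ρ₁ < 1 ∧ Real.log (ρ₁ + ρ₂ + (1 - ρ₁) * κ) < -μ * δ) ∨
        ρ₁ + ρ₂ < Real.exp (-μ * δ) := by
  set a := ‖(1 : Matrix (Fin n) (Fin n) ℝ) + D‖ with ha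
  set b := ‖E‖ with hb
  set lam := (⨆ i, hA.eigenvalues i) with hlam
  have hb0 : (0:ℝ) ≤ b := norm_nonneg _
  have hab : (0:ℝ) < a + b := by linarith
  set c := Real.exp (-lam * δ) with hc
  have hc0 : (0:ℝ) < c := Real.exp_pos _
  set s := (a + b)^2 with hs
  have hs0 : (0:ℝ) < s := by positivity
  have hsc : s < c := by
    have hse : s = Real.exp (2 * Real.log (a+b)) := by
      rw [two_mul, Real.exp_add, Real.exp_log hab]; ring
    rw [hse]; exact Real.exp_lt_exp.mpr h
  set m := (s + c)/2 with hm
  have hsm : s < m := by rw [hm]; linarith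
  have hmc : m < c := by rw [hm]; linarith
  have hm0 : (0:ℝ) < m := by linarith
  have hsqm : a + b < Real.sqrt m := by
    have h1 := Real.sqrt_lt_sqrt hs0.le hsm
    rwa [hs, Real.sqrt_sq hab.le] at h1
  have hu : (0:ℝ) < Real.sqrt m - (a+b) := by linarith
  set t := 1 + (Real.sqrt m - (a+b))/(2*(b+1)) with ht
  have hbp : (0:ℝ) < 2*(b+1) := by linarith
  have ht1 : (1:ℝ) < t := by
    have : 0 < (Real.sqrt m - (a+b))/(2*(b+1)) := div_pos hu hbp
    rw [ht]; linarith
  have htb : a + t*b < Real.sqrt m := by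
    have h2 : (Real.sqrt m - (a+b)) * b / (2*(b+1)) < Real.sqrt m - (a+b) := by
      rw [div_lt_iff₀ hbp]
      nlinarith
    have h3 : a + t * b = a + b + (Real.sqrt m - (a+b)) * b / (2*(b+1)) := by
      rw [ht]; ring
    rw [h3]; linarith
  have ht0 : (0:ℝ) < t := by linarith
  clear_value a b lam c s m t
  refine ⟨t^2 - 1, by nlinarith, ?_⟩
  have hsq : Real.sqrt (1 + (t^2 - 1)) = t := by
    rw [show (1 + (t^2-1)) = t^2 by ring, Real.sqrt_sq ht0.le]
  have hcm1 : (1:ℝ) < c/m := (one_lt_div hm0).mpr hmc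
  set ε := Real.log (c/m) / (2*δ) with hε
  have hε0 : (0:ℝ) < ε := div_pos (Real.log_pos hcm1) (by linarith)
  clear_value ε
  refine ⟨ε, hε0, ?_⟩
  intro ε' ρ₁ ρ₂ κ μ
  right
  unfold ρ₁ ρ₂ ε' μ
  rw [hsq]
  have hexp : Real.exp (-(lam + 2*ε) * δ) = m := by
    have he : -(lam + 2*ε) * δ = -lam * δ + (-Real.log (c/m)) := by
      rw [hε]; field_simp; ring
    rw [he, Real.exp_add, Real.exp_neg, Real.exp_log (div_pos hc0 hm0), ← hc, inv_div]
    field_simp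
  rw [hexp]
  have hsum : (1 + t*b/a)*a^2 + (1 + 1/(t*b/a))*(1+(t^2-1))*b^2 = (a+t*b)^2 := by
    rcases eq_or_lt_of_le hb0 with hbz | hbpos
    · rw [← hbz]; field_simp; ring
    · have htbne : t*b ≠ 0 := by positivity
      field_simp
      ring
  rw [hsum]
  have hfin : (a + t*b)^2 < (Real.sqrt m)^2 := by
    have h4 : (0:ℝ) ≤ a + t*b := by positivity
    exact pow_lt_pow_left₀ htb h4 (by norm_num)
  rwa [Real.sq_sqrt hm0.le] at hfin
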